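/- arXiv:1503.01397 — 2 statements merged into one kernel-verified Lean document; each statement's English description precedes it below -/
import Mathlib

section
/- The negative entropy function φ(x) = Σᵢ xᵢ log xᵢ is 1-strongly convex with respect to the ℓ1-norm over the interior of the probability simplex, i.e., for all x, y in the interior of the simplex, φ(y) ≥ φ(x) + ⟨∇φ(x), y − x⟩ + (1/2)‖y − x‖₁². -/
/-!
The Bregman divergence of `φ` at `x` is `∑ xᵢ klFun (yᵢ / xᵢ)`, the Kullback–Leibler divergence
`KL(y ‖ x)`, so the claim is Pinsker's inequality. That follows from the pointwise bound
`3 (a - b)² ≤ (2a + 4b) · b klFun (a / b)` and Cauchy–Schwarz with the weights `(2yᵢ + 4xᵢ) / 6`,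
which sum to one. After scaling to `b = 1` both sides of the pointwise bound agree at `t = 1`, and
the derivative of their difference is `4 ((t + 1) log t - 2 (t - 1))`, which has the sign of
`t - 1`.
-/

open Real Finset InformationTheory

theorem isMinOn_Ioi_of_hasDerivAt_of_sub_mul_nonneg {f f' : ℝ → ℝ} {a b : ℝ} (hab : a < b)
    (hf : ∀ t ∈ Set.Ioi a, HasDerivAt f (f' t) t) (hf' : ∀ t ∈ Set.Ioi a, 0 ≤ (t - b) * f' t) :
    IsMinOn f (Set.Ioi a) b := by
  have hderiv : ∀ t ∈ Set.Ioi a, deriv f t = f' t := fun t ht => (hf t ht).deriv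
  refine isMinOn_Ioi_of_deriv (hf b hab).continuousAt
    (fun t ht => (hf t ht.1).differentiableAt.differentiableWithinAt)
    (fun t ht => (hf t (hab.trans ht)).differentiableAt.differentiableWithinAt) ?_ ?_
  · intro t ht
    rw [hderiv t ht.1]
    exact nonpos_of_mul_nonneg_right (hf' t ht.1) (sub_neg.2 ht.2)
  · intro t ht
    rw [hderiv t (hab.trans ht)]
    exact nonneg_of_mul_nonneg_right (hf' t (hab.trans ht)) (sub_pos.2 ht)

theorem monotoneOn_add_one_mul_log_sub_two_mul_sub_one :
    MonotoneOn (fun t => (t + 1) * log t - 2 * (t - 1)) (Set.Ioi 0) := by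
  have hderiv : ∀ t ∈ Set.Ioi (0 : ℝ),
      HasDerivAt (fun t => (t + 1) * log t - 2 * (t - 1)) (log t + t⁻¹ - 1) t :=
    fun t (ht : 0 < t) => ((((hasDerivAt_id t).add_const 1).mul (hasDerivAt_log ht.ne')).sub
      (((hasDerivAt_id t).sub_const 1).const_mul 2)).congr_deriv
        (by simp only [id]; field_simp; ring)
  refine monotoneOn_of_hasDerivWithinAt_nonneg (f' := fun t => log t + t⁻¹ - 1) (convex_Ioi 0)
    (fun t ht => (hderiv t ht).continuousAt.continuousWithinAt) ?_ ?_ <;> rw [interior_Ioi]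
  · exact fun t ht => (hderiv t ht).hasDerivWithinAt
  · exact fun t ht => by linarith [one_sub_inv_le_log_of_pos ht]

theorem sub_one_mul_add_one_mul_log_sub_nonneg {t : ℝ} (ht : 0 < t) :
    0 ≤ (t - 1) * ((t + 1) * log t - 2 * (t - 1)) := by
  have hmono := monotoneOn_add_one_mul_log_sub_two_mul_sub_one
  have h1 : (1 : ℝ) ∈ Set.Ioi 0 := Set.mem_Ioi.2 one_pos
  rcases le_total 1 t with h | h
  · have := hmono h1 ht h
    simp only [log_one] at this
    exact mul_nonneg (sub_nonneg.2 h) (by linarith)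
  · have := hmono ht h1 h
    simp only [log_one] at this
    exact mul_nonneg_of_nonpos_of_nonpos (sub_nonpos.2 h) (by linarith)

theorem three_mul_sq_sub_one_le_mul_klFun {t : ℝ} (ht : 0 < t) :
    3 * (t - 1) ^ 2 ≤ (2 * t + 4) * klFun t := by
  have hmin : IsMinOn (fun t => (2 * t + 4) * klFun t - 3 * (t - 1) ^ 2) (Set.Ioi 0) 1 := by
    refine isMinOn_Ioi_of_hasDerivAt_of_sub_mul_nonneg
      (f' := fun t => 4 * ((t + 1) * log t - 2 * (t - 1))) one_pos (fun s hs => ?_) (fun s hs => ?_)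
    · exact ((((hasDerivAt_id s).const_mul 2).add_const 4).mul
        (hasDerivAt_klFun (Set.mem_Ioi.1 hs).ne')).sub
        ((((hasDerivAt_id s).sub_const 1).pow 2).const_mul 3) |>.congr_deriv
          (by simp only [klFun_apply, id]; push_cast; ring)
    · nlinarith [sub_one_mul_add_one_mul_log_sub_nonneg (Set.mem_Ioi.1 hs)]
  have := isMinOn_iff.1 hmin t ht
  simp only [klFun_one] at this
  linarith

theorem three_mul_sq_sub_le_mul_mul_klFun_div {a b : ℝ} (ha : 0 < a) (hb : 0 < b) :
    3 * (a - b) ^ 2 ≤ (2 * a + 4 * b) * (b * klFun (a / b)) := by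
  have hb' : b ≠ 0 := hb.ne'
  calc 3 * (a - b) ^ 2 = b ^ 2 * (3 * (a / b - 1) ^ 2) := by field_simp
    _ ≤ b ^ 2 * ((2 * (a / b) + 4) * klFun (a / b)) :=
      mul_le_mul_of_nonneg_left (three_mul_sq_sub_one_le_mul_klFun (div_pos ha hb)) (sq_nonneg b)
    _ = (2 * a + 4 * b) * (b * klFun (a / b)) := by field_simp

theorem mul_klFun_div_eq {x y : ℝ} (hx : 0 < x) (hy : 0 < y) :
    x * klFun (y / x) = y * log y - x * log x - (log x + 1) * (y - x) := by
  rw [klFun_apply, log_div hy.ne' hx.ne']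
  field_simp
  ring

theorem sq_sum_abs_sub_le_two_mul_sum_mul_klFun_div {ι : Type*} [Fintype ι] {p q : ι → ℝ}
    (hp : ∀ i, 0 < p i) (hq : ∀ i, 0 < q i) (hp_sum : ∑ i, p i = 1) (hq_sum : ∑ i, q i = 1) :
    (∑ i, |p i - q i|) ^ 2 ≤ 2 * ∑ i, q i * klFun (p i / q i) := by
  have hw : ∀ i ∈ univ, 0 < 2 * p i + 4 * q i := fun i _ => by linarith [hp i, hq i]
  have hw_sum : ∑ i, (2 * p i + 4 * q i) = 6 := by
    rw [sum_add_distrib, ← mul_sum, ← mul_sum, hp_sum, hq_sum]; norm_num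
  calc (∑ i, |p i - q i|) ^ 2 = 6 * ((∑ i, |p i - q i|) ^ 2 / ∑ i, (2 * p i + 4 * q i)) := by
        rw [hw_sum]; ring
    _ ≤ 6 * ∑ i, |p i - q i| ^ 2 / (2 * p i + 4 * q i) := by
        gcongr; exact sq_sum_div_le_sum_sq_div _ _ hw
    _ ≤ 6 * ∑ i, q i * klFun (p i / q i) / 3 := by
        gcongr 6 * ?_
        refine sum_le_sum fun i hi => ?_
        rw [sq_abs, div_le_iff₀ (hw i hi)]
        linarith [three_mul_sq_sub_le_mul_mul_klFun_div (hp i) (hq i)]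
    _ = 2 * ∑ i, q i * klFun (p i / q i) := by rw [← sum_div]; ring

/-- The negative entropy `φ(x) = ∑ᵢ xᵢ log xᵢ` is 1-strongly convex
w.r.t. the ℓ1-norm over the interior of the probability simplex:
`φ(y) ≥ φ(x) + ⟨∇φ(x), y − x⟩ + (1/2)‖y − x‖₁²`, where `∇φ(x)ᵢ = log xᵢ + 1`. -/
theorem neg_entropy_strongly_convex_l1 (n : ℕ)
    (x y : Fin n → ℝ)
    (hx_pos : ∀ i, 0 < x i) (hx_sum : ∑ i, x i = 1)
    (hy_pos : ∀ i, 0 < y i) (hy_sum : ∑ i, y i = 1) :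
    (∑ i, y i * Real.log (y i)) ≥
      (∑ i, x i * Real.log (x i))
      + (∑ i, (Real.log (x i) + 1) * (y i - x i))
      + (1 / 2) * (∑ i, |y i - x i|) ^ 2 := by
  have hbregman : ∑ i, x i * klFun (y i / x i) = ∑ i, y i * log (y i) - ∑ i, x i * log (x i)
      - ∑ i, (log (x i) + 1) * (y i - x i) := by
    simp only [← sum_sub_distrib, mul_klFun_div_eq (hx_pos _) (hy_pos _)]
  have hpinsker := sq_sum_abs_sub_le_two_mul_sum_mul_klFun_div hy_pos hx_pos hy_sum hx_sum
  linarith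
end

section
/- Let f be convex with L-Lipschitz gradient on a compact convex set X with Bregman diameter D² = max_{x∈X} B_φ(x, x₀) for prox-center x₀ and 1-strongly convex φ. Then the accelerated dual-averaging iterates with weights c_t = 2/(t+1) achieve f(μ_t) − min_{x∈X} f(x) ≤ 4LD²/t². -/
/-!
An estimate-sequence argument. With the weights `A_t = t(t+1)/2`, the weighted linearizations
`ℓ_t(z) = ∑_{s ≤ t} s (f(u_s) + ⟪∇f(u_s), z - u_s⟫)` stay below `A_t f` on `X` by convexity,
and `ν_t` minimizes the `2L`-strongly convex function `ψ_t = ℓ_t + 2L B_φ(·, x₀)` over `X`.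
The invariant `A_t f(μ_t) ≤ ψ_t(ν_t)` propagates: as `μ_{t+1} - u_{t+1} = c_{t+1} (ν_{t+1} - ν_t)`,
the descent lemma at `u_{t+1}` costs `L/2 · c_{t+1}² A_{t+1} ‖ν_{t+1} - ν_t‖²`, which the
strong-convexity gain `L ‖ν_{t+1} - ν_t‖²` of `ψ_t` covers because `(t+1)² ≤ 2 A_{t+1}`.
Then `ψ_t(ν_t) ≤ ψ_t(x⋆)` gives `A_t (f(μ_t) - f(x⋆)) ≤ 2L D²`.
-/

open RealInnerProductSpace Set Filter Topology AffineMap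

section ConvexAnalysis

variable {E : Type*} [NormedAddCommGroup E] [InnerProductSpace ℝ E]

theorem HasGradientAt.hasDerivAt_comp_lineMap [CompleteSpace E] {f : E → ℝ} {g x y : E}
    {s : ℝ} (hf : HasGradientAt f g (lineMap x y s)) :
    HasDerivAt (fun s => f (lineMap x y s)) ⟪g, y - x⟫ s :=
  hf.hasFDerivAt.comp_hasDerivAt s hasDerivAt_lineMap

theorem ConvexOn.add_inner_le_of_hasGradientAt [CompleteSpace E] {s : Set E} {f : E → ℝ}
    {g x y : E} (hf : ConvexOn ℝ s f) (hg : HasGradientAt f g x) (hx : x ∈ s) (hy : y ∈ s) :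
    f x + ⟪g, y - x⟫ ≤ f y := by
  have hd : HasDerivAt (fun s : ℝ => f (lineMap x y s)) ⟪g, y - x⟫ 0 :=
    HasGradientAt.hasDerivAt_comp_lineMap (by simpa using hg)
  have hslope := (hf.comp_affineMap (lineMap x y : ℝ →ᵃ[ℝ] E)).le_slope_of_hasDerivAt
    (by simpa using hx) (by simpa using hy) zero_lt_one hd
  simp only [slope_def_field, Function.comp_apply, lineMap_apply_one, lineMap_apply_zero,
    sub_zero, div_one] at hslope
  linarith

theorem le_add_inner_add_sq_of_lipschitz_gradient [CompleteSpace E] {f : E → ℝ} {gf : E → E}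
    {L : ℝ} (hf : ∀ x, HasGradientAt f (gf x) x) (hL : ∀ x y, ‖gf x - gf y‖ ≤ L * ‖x - y‖)
    (x y : E) : f y ≤ f x + ⟪gf x, y - x⟫ + L / 2 * ‖y - x‖ ^ 2 := by
  -- `h` is antitone on `[0, 1]` because `gf` is `L`-Lipschitz, and `h 1 ≤ h 0` is the claim
  set h : ℝ → ℝ := fun s =>
    f (lineMap x y s) - s * ⟪gf x, y - x⟫ - L / 2 * s ^ 2 * ‖y - x‖ ^ 2
  have hd : ∀ s, HasDerivAt h
      (⟪gf (lineMap x y s), y - x⟫ - ⟪gf x, y - x⟫ - L * s * ‖y - x‖ ^ 2) s := fun s => by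
    have hf' := (hf (lineMap x y s)).hasDerivAt_comp_lineMap (x := x) (y := y)
    have := (hf'.sub ((hasDerivAt_id s).mul_const ⟪gf x, y - x⟫)).sub
      (((hasDerivAt_pow 2 s).const_mul (L / 2)).mul_const (‖y - x‖ ^ 2))
    exact this.congr_deriv (by simp only [Nat.cast_ofNat, Nat.add_one_sub_one, pow_one]; ring)
  have hanti : AntitoneOn h (Icc 0 1) := by
    refine antitoneOn_of_hasDerivWithinAt_nonpos (convex_Icc 0 1)
      (fun s _ => (hd s).continuousAt.continuousWithinAt) (fun s _ => (hd s).hasDerivWithinAt)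
      fun s hs => ?_
    rw [interior_Icc] at hs
    have hseg : lineMap x y s - x = s • (y - x) := by simp [lineMap_apply_module']
    have hlip : ‖gf (lineMap x y s) - gf x‖ ≤ L * (s * ‖y - x‖) := by
      simpa [hseg, norm_smul, abs_of_pos hs.1] using hL (lineMap x y s) x
    have hcs := real_inner_le_norm (gf (lineMap x y s) - gf x) (y - x)
    rw [inner_sub_left] at hcs
    nlinarith [mul_le_mul_of_nonneg_right hlip (norm_nonneg (y - x))]
  have h01 : h 1 ≤ h 0 :=
    hanti (left_mem_Icc.2 zero_le_one) (right_mem_Icc.2 zero_le_one) zero_le_one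
  simp only [h, lineMap_apply_one, lineMap_apply_zero] at h01
  linarith

theorem strongConvexOn_of_add_inner_add_sq_le {s : Set E} {m : ℝ} {f : E → ℝ} {g : E → E}
    (hs : Convex ℝ s) (h : ∀ x ∈ s, ∀ y ∈ s, f x + ⟪g x, y - x⟫ + m / 2 * ‖y - x‖ ^ 2 ≤ f y) :
    StrongConvexOn s m f := by
  refine ⟨hs, fun x hx y hy a b ha hb hab => ?_⟩
  obtain rfl := eq_sub_of_add_eq hab
  set z := (1 - b) • x + b • y
  have hx' : x - z = b • (x - y) := by module
  have hy' : y - z = (-(1 - b)) • (x - y) := by module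
  have h₁ := h z (hs hx hy ha hb hab) x hx
  have h₂ := h z (hs hx hy ha hb hab) y hy
  rw [hx', norm_smul, real_inner_smul_right, Real.norm_of_nonneg hb] at h₁
  rw [hy', norm_smul, real_inner_smul_right, norm_neg, Real.norm_of_nonneg ha] at h₂
  simp only [smul_eq_mul]
  linear_combination (1 - b) * h₁ + b * h₂ - (f z + m / 2 * (1 - b) * b * ‖x - y‖ ^ 2) * hab

theorem StrongConvexOn.add_sq_le_of_isMinOn {s : Set E} {m : ℝ} {f : E → ℝ} {a y : E}
    (hf : StrongConvexOn s m f) (hmin : IsMinOn f s a) (ha : a ∈ s) (hy : y ∈ s) :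
    f a + m / 2 * ‖y - a‖ ^ 2 ≤ f y := by
  set K := m / 2 * ‖y - a‖ ^ 2
  have hsegment : ∀ l ∈ Ioo (0 : ℝ) 1, f a + (1 - l) * K ≤ f y := by
    rintro l ⟨hl₀, hl₁⟩
    have hmem := hf.1 hy ha hl₀.le (sub_nonneg.2 hl₁.le) (add_sub_cancel l 1)
    have hle := (isMinOn_iff.1 hmin _ hmem).trans
      (hf.2 hy ha hl₀.le (sub_nonneg.2 hl₁.le) (add_sub_cancel l 1))
    simp only [smul_eq_mul] at hle
    refine le_of_mul_le_mul_left ?_ hl₀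
    linear_combination hle
  have hlim : Tendsto (fun l : ℝ => f a + (1 - l) * K) (𝓝[>] 0) (𝓝 (f a + K)) := by
    have : Continuous fun l : ℝ => f a + (1 - l) * K := by fun_prop
    simpa using (this.tendsto 0).mono_left nhdsWithin_le_nhds
  exact le_of_tendsto hlim (eventually_of_mem (Ioo_mem_nhdsGT one_pos) hsegment)

theorem StrongConvexOn.const_mul {s : Set E} {m c : ℝ} {f : E → ℝ} (hf : StrongConvexOn s m f)
    (hc : 0 ≤ c) : StrongConvexOn s (c * m) fun x => c * f x := by
  refine ⟨hf.1, fun x hx y hy a b ha hb hab => ?_⟩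
  have := mul_le_mul_of_nonneg_left (hf.2 hx hy ha hb hab) hc
  simp only [smul_eq_mul] at this ⊢
  linear_combination this

theorem ConvexOn.add_strongConvexOn {s : Set E} {m : ℝ} {f g : E → ℝ} (hg : ConvexOn ℝ s g)
    (hf : StrongConvexOn s m f) : StrongConvexOn s m fun x => g x + f x := by
  have h := (uniformConvexOn_zero.2 hg).add hf
  rw [zero_add] at h
  exact h

/-- `bregmanDiv φ gφ x₀ x` is the Bregman divergence `B_φ(x, x₀)`, `gφ` standing for `∇φ`. -/
def bregmanDiv (φ : E → ℝ) (gφ : E → E) (x₀ x : E) : ℝ :=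
  φ x - φ x₀ - ⟪gφ x₀, x - x₀⟫

theorem bregmanDiv_self (φ : E → ℝ) (gφ : E → E) (x : E) : bregmanDiv φ gφ x x = 0 := by
  simp [bregmanDiv]

theorem strongConvexOn_bregmanDiv {s : Set E} {m : ℝ} {φ : E → ℝ} {gφ : E → E} (x₀ : E)
    (hs : Convex ℝ s) (hφ : ∀ x ∈ s, ∀ y ∈ s, φ x + ⟪gφ x, y - x⟫ + m / 2 * ‖y - x‖ ^ 2 ≤ φ y) :
    StrongConvexOn s m (bregmanDiv φ gφ x₀) := by
  refine strongConvexOn_of_add_inner_add_sq_le (g := fun x => gφ x - gφ x₀) hs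
    fun x hx y hy => ?_
  have := hφ x hx y hy
  simp only [bregmanDiv, inner_sub_left, inner_sub_right] at this ⊢
  linarith

end ConvexAnalysis

section EstimateSequence

variable {E : Type*} [NormedAddCommGroup E] [InnerProductSpace ℝ E] [CompleteSpace E]

theorem estimate_sequence_step {X : Set E} {f : E → ℝ} {gf : E → E} {ψ : E → ℝ}
    {L κ A a c : ℝ} {μ ν ν' u μ' : E}
    (hf_conv : ConvexOn ℝ X f) (hf_grad : ∀ x, HasGradientAt f (gf x) x)
    (hf_lip : ∀ x y, ‖gf x - gf y‖ ≤ L * ‖x - y‖)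
    (hA : 0 ≤ A) (ha : 0 ≤ a) (hc : c * (A + a) = a) (hκ : L * c * a ≤ κ)
    (hμX : μ ∈ X) (huX : u ∈ X) (hu : u = (1 - c) • μ + c • ν)
    (hμ' : μ' = (1 - c) • μ + c • ν')
    (hψ : ψ ν + κ / 2 * ‖ν' - ν‖ ^ 2 ≤ ψ ν') (hfμ : A * f μ ≤ ψ ν) :
    (A + a) * f μ' ≤ ψ ν' + a * (f u + ⟪gf u, ν' - u⟫) := by
  have hdescent := le_add_inner_add_sq_of_lipschitz_gradient hf_grad hf_lip u μ'
  have hconv := hf_conv.add_inner_le_of_hasGradientAt (hf_grad u) huX hμX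
  have hμ'u : μ' - u = c • (ν' - ν) := by rw [hμ', hu]; module
  rw [hμ'u, real_inner_smul_right, norm_smul, mul_pow, Real.norm_eq_abs, sq_abs] at hdescent
  -- `A • μ + a • ν = (A + a) • u`, paired with `gf u`
  have hbalance : A * ⟪gf u, μ - u⟫ + a * ⟪gf u, ν' - u⟫ = a * ⟪gf u, ν' - ν⟫ := by
    set g := gf u
    rw [hu]
    simp only [inner_sub_right, inner_add_right, real_inner_smul_right]
    linear_combination (⟪g, μ⟫ - ⟪g, ν⟫) * hc
  -- the descent step costs `L c a / 2 · ‖ν' - ν‖²`, paid for by the gain `κ / 2 · ‖ν' - ν‖²`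
  linear_combination mul_le_mul_of_nonneg_left hdescent (add_nonneg hA ha)
    + mul_le_mul_of_nonneg_left hconv hA + mul_le_mul_of_nonneg_right hκ (sq_nonneg ‖ν' - ν‖) / 2
    + hψ + hfμ - hbalance + (⟪gf u, ν' - ν⟫ + L / 2 * c * ‖ν' - ν‖ ^ 2) * hc

end EstimateSequence

section AcceleratedDualAveraging

variable {E : Type*} [NormedAddCommGroup E] [InnerProductSpace ℝ E]

/-- The weights `A_t = t(t+1)/2`, for which the step `2/(t+1)` is `(A_t - A_{t-1}) / A_t`. -/
noncomputable def accelWeight (t : ℕ) : ℝ := t * (t + 1) / 2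

theorem accelWeight_nonneg (t : ℕ) : 0 ≤ accelWeight t := by
  unfold accelWeight; positivity

theorem accelWeight_succ (t : ℕ) : accelWeight (t + 1) = accelWeight t + (t + 1) := by
  unfold accelWeight; push_cast; ring

theorem two_div_mul_accelWeight_add (t : ℕ) :
    2 / ((t + 1 : ℝ) + 1) * (accelWeight t + (t + 1)) = t + 1 := by
  unfold accelWeight; field_simp; ring

theorem two_div_succ_succ_mem_Icc (t : ℕ) : 2 / ((t + 1 : ℝ) + 1) ∈ Icc 0 1 :=
  ⟨by positivity, (div_le_one (by positivity)).2 (by linarith [t.cast_nonneg (α := ℝ)])⟩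

/-- Accelerated dual averaging with `c_t = 2/(t+1)`, for a general regularizer `B` in place of
`B_φ(·, x₀)`. -/
structure IsAccelDualAveraging (X : Set E) (gf : E → E) (B : E → ℝ) (L : ℝ) (x₀ : E)
    (μ ν u gbar : ℕ → E) : Prop where
  μ_zero : μ 0 = x₀
  ν_zero : ν 0 = x₀
  u_succ : ∀ t : ℕ, u (t + 1) =
    (1 - 2 / ((t + 1 : ℝ) + 1)) • μ t + (2 / ((t + 1 : ℝ) + 1)) • ν t
  gbar_succ : ∀ t : ℕ, gbar (t + 1) =
    (1 - 2 / ((t + 1 : ℝ) + 1)) • gbar t + (2 / ((t + 1 : ℝ) + 1)) • gf (u (t + 1))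
  ν_succ_mem : ∀ t : ℕ, ν (t + 1) ∈ X
  isMinOn_ν_succ : ∀ t : ℕ, IsMinOn (fun z => ⟪gbar (t + 1), z⟫
    + (4 * L / ((t + 1 : ℝ) * ((t + 1 : ℝ) + 1))) * B z) X (ν (t + 1))
  μ_succ : ∀ t : ℕ, μ (t + 1) =
    (1 - 2 / ((t + 1 : ℝ) + 1)) • μ t + (2 / ((t + 1 : ℝ) + 1)) • ν (t + 1)

/-- Along the iterates this is `∑_{s=1}^t s (f(u_s) + ⟪∇f(u_s), z - u_s⟫)`, a lower model of
`A_t f` (see `IsAccelDualAveraging.dualModel_succ`); written through `ḡ_t` it is visibly affine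
in `z`. -/
noncomputable def dualModel (f : E → ℝ) (gf : E → E) (u gbar : ℕ → E) (t : ℕ) (z : E) : ℝ :=
  accelWeight t * ⟪gbar t, z⟫
    + ∑ s ∈ Finset.range t, (s + 1 : ℝ) * (f (u (s + 1)) - ⟪gf (u (s + 1)), u (s + 1)⟫)

theorem strongConvexOn_dualModel_add {X : Set E} {f B : E → ℝ} {gf : E → E} {L : ℝ}
    {u gbar : ℕ → E} (hX : Convex ℝ X) (hB : StrongConvexOn X 1 B) (hL : 0 ≤ L) (t : ℕ) :
    StrongConvexOn X (2 * L) fun z => dualModel f gf u gbar t z + 2 * L * B z := by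
  have hlin : ConvexOn ℝ X (dualModel f gf u gbar t) :=
    (((innerₛₗ ℝ (gbar t)).convexOn hX).smul (accelWeight_nonneg t)).add_const _
  simpa using hlin.add_strongConvexOn (hB.const_mul (by positivity : 0 ≤ 2 * L))

namespace IsAccelDualAveraging

variable {X : Set E} {f B : E → ℝ} {gf : E → E} {L : ℝ} {x₀ : E} {μ ν u gbar : ℕ → E}

theorem iterates_mem (h : IsAccelDualAveraging X gf B L x₀ μ ν u gbar) (hX : Convex ℝ X)
    (hx₀ : x₀ ∈ X) (t : ℕ) : μ t ∈ X ∧ ν t ∈ X := by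
  induction t with
  | zero => exact ⟨h.μ_zero ▸ hx₀, h.ν_zero ▸ hx₀⟩
  | succ t ih =>
    refine ⟨?_, h.ν_succ_mem t⟩
    rw [h.μ_succ t, ← lineMap_apply_module]
    exact hX.lineMap_mem ih.1 (h.ν_succ_mem t) (two_div_succ_succ_mem_Icc t)

theorem u_succ_mem (h : IsAccelDualAveraging X gf B L x₀ μ ν u gbar) (hX : Convex ℝ X)
    (hx₀ : x₀ ∈ X) (t : ℕ) : u (t + 1) ∈ X := by
  rw [h.u_succ t, ← lineMap_apply_module]
  obtain ⟨hμ, hν⟩ := h.iterates_mem hX hx₀ t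
  exact hX.lineMap_mem hμ hν (two_div_succ_succ_mem_Icc t)

theorem dualModel_succ (h : IsAccelDualAveraging X gf B L x₀ μ ν u gbar) (t : ℕ) (z : E) :
    dualModel f gf u gbar (t + 1) z = dualModel f gf u gbar t z
      + (t + 1) * (f (u (t + 1)) + ⟪gf (u (t + 1)), z - u (t + 1)⟫) := by
  simp only [dualModel, accelWeight_succ, h.gbar_succ t, Finset.sum_range_succ, inner_add_left,
    real_inner_smul_left, inner_sub_right]
  linear_combination (⟪gf (u (t + 1)), z⟫ - ⟪gbar t, z⟫) * two_div_mul_accelWeight_add t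

theorem dualModel_le [CompleteSpace E] (h : IsAccelDualAveraging X gf B L x₀ μ ν u gbar)
    (hX : Convex ℝ X) (hx₀ : x₀ ∈ X) (hf_conv : ConvexOn ℝ X f)
    (hf_grad : ∀ x, HasGradientAt f (gf x) x) {z : E} (hz : z ∈ X) (t : ℕ) :
    dualModel f gf u gbar t z ≤ accelWeight t * f z := by
  induction t with
  | zero => simp [dualModel, accelWeight]
  | succ t ih =>
    have hlin := hf_conv.add_inner_le_of_hasGradientAt (hf_grad _) (h.u_succ_mem hX hx₀ t) hz
    rw [h.dualModel_succ, accelWeight_succ]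
    linear_combination ih + mul_le_mul_of_nonneg_left hlin (by positivity : (0 : ℝ) ≤ t + 1)

theorem isMinOn_dualModel_add (h : IsAccelDualAveraging X gf B L x₀ μ ν u gbar) (hL : 0 ≤ L)
    (hB₀ : B x₀ = 0) (hB_nonneg : ∀ x ∈ X, 0 ≤ B x) (t : ℕ) :
    IsMinOn (fun z => dualModel f gf u gbar t z + 2 * L * B z) X (ν t) := by
  rw [isMinOn_iff]
  intro z hz
  cases t with
  | zero =>
    simpa [dualModel, accelWeight, h.ν_zero, hB₀] using mul_nonneg (by positivity) (hB_nonneg z hz)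
  | succ t =>
    have hA : 0 < accelWeight (t + 1) := by unfold accelWeight; positivity
    have hAβ : accelWeight (t + 1) * (4 * L / ((t + 1 : ℝ) * ((t + 1 : ℝ) + 1))) = 2 * L := by
      unfold accelWeight; push_cast; field_simp; ring
    have hmin := mul_le_mul_of_nonneg_left (isMinOn_iff.1 (h.isMinOn_ν_succ t) z hz) hA.le
    simp only [dualModel]
    linear_combination hmin + (B z - B (ν (t + 1))) * hAβ

theorem weight_mul_le_dualModel_add [CompleteSpace E]
    (h : IsAccelDualAveraging X gf B L x₀ μ ν u gbar) (hX : Convex ℝ X) (hx₀ : x₀ ∈ X)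
    (hf_conv : ConvexOn ℝ X f) (hf_grad : ∀ x, HasGradientAt f (gf x) x)
    (hf_lip : ∀ x y, ‖gf x - gf y‖ ≤ L * ‖x - y‖)
    (hL : 0 ≤ L) (hB : StrongConvexOn X 1 B) (hB₀ : B x₀ = 0) (hB_nonneg : ∀ x ∈ X, 0 ≤ B x)
    (t : ℕ) :
    accelWeight t * f (μ t) ≤ dualModel f gf u gbar t (ν t) + 2 * L * B (ν t) := by
  induction t with
  | zero => simp [dualModel, accelWeight, h.ν_zero, hB₀]
  | succ t ih =>
    have hψ := (strongConvexOn_dualModel_add (f := f) hX hB hL t).add_sq_le_of_isMinOn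
      (h.isMinOn_dualModel_add hL hB₀ hB_nonneg t) (h.iterates_mem hX hx₀ t).2 (h.ν_succ_mem t)
    have hκ : L * (2 / ((t + 1 : ℝ) + 1)) * (t + 1) ≤ 2 * L := by
      have : 2 / ((t + 1 : ℝ) + 1) * (t + 1) ≤ 2 := by
        rw [div_mul_eq_mul_div, div_le_iff₀ (by positivity)]; linarith
      nlinarith
    have hstep := estimate_sequence_step
      (ψ := fun z => dualModel f gf u gbar t z + 2 * L * B z) hf_conv hf_grad hf_lip
      (accelWeight_nonneg t) (by positivity) (two_div_mul_accelWeight_add t) hκ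
      (h.iterates_mem hX hx₀ t).1 (h.u_succ_mem hX hx₀ t) (h.u_succ t) (h.μ_succ t) hψ ih
    rw [accelWeight_succ, h.dualModel_succ]
    linarith

theorem weight_mul_le [CompleteSpace E] (h : IsAccelDualAveraging X gf B L x₀ μ ν u gbar)
    (hX : Convex ℝ X) (hx₀ : x₀ ∈ X) (hf_conv : ConvexOn ℝ X f)
    (hf_grad : ∀ x, HasGradientAt f (gf x) x) (hf_lip : ∀ x y, ‖gf x - gf y‖ ≤ L * ‖x - y‖)
    (hL : 0 ≤ L) (hB : StrongConvexOn X 1 B) (hB₀ : B x₀ = 0) (hB_nonneg : ∀ x ∈ X, 0 ≤ B x)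
    (t : ℕ) {x : E} (hx : x ∈ X) :
    accelWeight t * f (μ t) ≤ accelWeight t * f x + 2 * L * B x :=
  calc accelWeight t * f (μ t)
      ≤ dualModel f gf u gbar t (ν t) + 2 * L * B (ν t) :=
        h.weight_mul_le_dualModel_add hX hx₀ hf_conv hf_grad hf_lip hL hB hB₀ hB_nonneg t
    _ ≤ dualModel f gf u gbar t x + 2 * L * B x :=
        isMinOn_iff.1 (h.isMinOn_dualModel_add hL hB₀ hB_nonneg t) x hx
    _ ≤ accelWeight t * f x + 2 * L * B x := by
        gcongr; exact h.dualModel_le hX hx₀ hf_conv hf_grad hx t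

end IsAccelDualAveraging

end AcceleratedDualAveraging

theorem accelerated_dual_averaging_rate_general
    {E : Type*} [NormedAddCommGroup E] [InnerProductSpace ℝ E] [CompleteSpace E]
    (X : Set E) (hX : Convex ℝ X)
    (f φ : E → ℝ) (gf gφ : E → E) (Lip D : ℝ) (hLip : 0 < Lip)
    (hf_conv : ConvexOn ℝ X f)
    (hf_grad : ∀ x, HasGradientAt f (gf x) x)
    (hf_lip : ∀ x y, ‖gf x - gf y‖ ≤ Lip * ‖x - y‖)
    (hφ_sc : ∀ x y, φ y ≥ φ x + ⟪gφ x, y - x⟫ + 1 / 2 * ‖y - x‖ ^ 2)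
    (x₀ : E) (hx₀ : x₀ ∈ X)
    -- Bregman diameter: D² = max_{x ∈ X} B_φ(x, x₀)
    (hDdiam : ∀ x ∈ X, φ x - φ x₀ - ⟪gφ x₀, x - x₀⟫ ≤ D ^ 2)
    (μ ν u gbar : ℕ → E)
    (hμ0 : μ 0 = x₀) (hν0 : ν 0 = x₀)
    (hu : ∀ t : ℕ, u (t + 1) =
      (1 - 2 / ((t + 1 : ℝ) + 1)) • μ t + (2 / ((t + 1 : ℝ) + 1)) • ν t)
    (hg : ∀ t : ℕ, gbar (t + 1) =
      (1 - 2 / ((t + 1 : ℝ) + 1)) • gbar t + (2 / ((t + 1 : ℝ) + 1)) • gf (u (t + 1)))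
    (hν : ∀ t : ℕ, ν (t + 1) ∈ X ∧
      IsMinOn (fun z => ⟪gbar (t + 1), z⟫
          + (4 * Lip / ((t + 1 : ℝ) * ((t + 1 : ℝ) + 1)))
            * (φ z - φ x₀ - ⟪gφ x₀, z - x₀⟫))
        X (ν (t + 1)))
    (hμ : ∀ t : ℕ, μ (t + 1) =
      (1 - 2 / ((t + 1 : ℝ) + 1)) • μ t + (2 / ((t + 1 : ℝ) + 1)) • ν (t + 1))
    (xstar : E) (hxstar : xstar ∈ X) :
    ∀ t : ℕ, 1 ≤ t → f (μ t) - f xstar ≤ 4 * Lip * D ^ 2 / (t : ℝ) ^ 2 := by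
  intro t ht
  have halg : IsAccelDualAveraging X gf (bregmanDiv φ gφ x₀) Lip x₀ μ ν u gbar :=
    ⟨hμ0, hν0, hu, hg, fun t => (hν t).1, fun t => (hν t).2, hμ⟩
  have hB_nonneg : ∀ x ∈ X, 0 ≤ bregmanDiv φ gφ x₀ x := fun x _ => by
    unfold bregmanDiv; nlinarith [hφ_sc x₀ x, sq_nonneg ‖x - x₀‖]
  have hbound := halg.weight_mul_le hX hx₀ hf_conv hf_grad hf_lip hLip.le
    (strongConvexOn_bregmanDiv x₀ hX fun x _ y _ => hφ_sc x y) (bregmanDiv_self φ gφ x₀)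
    hB_nonneg t hxstar
  have hA : 0 < accelWeight t := by unfold accelWeight; positivity
  calc f (μ t) - f xstar ≤ 2 * Lip * bregmanDiv φ gφ x₀ xstar / accelWeight t := by
        rw [le_div_iff₀ hA]; linarith
    _ ≤ 2 * Lip * D ^ 2 / accelWeight t := by gcongr; exact hDdiam xstar hxstar
    _ ≤ 4 * Lip * D ^ 2 / (t : ℝ) ^ 2 := by
        rw [div_le_div_iff₀ hA (by positivity), accelWeight]
        nlinarith [mul_nonneg (mul_nonneg hLip.le (sq_nonneg D)) (Nat.cast_nonneg (α := ℝ) t)]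

/-- Accelerated dual averaging, Xiao 2010 Cor. 7: with
`c_t = 2/(t+1)`, `u_t = (1−c_t)μ_{t−1} + c_t ν_{t−1}`,
`ḡ_t = (1−c_t)ḡ_{t−1} + c_t ∇f(u_t)`,
`ν_t = argmin_{x∈X} ⟨ḡ_t, x⟩ + (4L/(t(t+1))) B_φ(x, x₀)`,
`μ_t = (1−c_t)μ_{t−1} + c_t ν_t`, for `f` convex with `L`-Lipschitz gradient on
a compact convex `X` with Bregman diameter `D² = max_{x∈X} B_φ(x, x₀)` for a
1-strongly convex `φ`, we get `f(μ_t) − min_{x∈X} f ≤ 4 L D² / t²`. -/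
theorem accelerated_dual_averaging_rate
    {E : Type*} [NormedAddCommGroup E] [InnerProductSpace ℝ E] [CompleteSpace E]
    (X : Set E) (hXc : IsCompact X) (hX : Convex ℝ X)
    (f φ : E → ℝ) (gf gφ : E → E) (Lip D : ℝ) (hLip : 0 < Lip) (hD : 0 ≤ D)
    (hf_conv : ConvexOn ℝ X f)
    (hf_grad : ∀ x, HasGradientAt f (gf x) x)
    (hf_lip : ∀ x y, ‖gf x - gf y‖ ≤ Lip * ‖x - y‖)
    (hφ_grad : ∀ x, HasGradientAt φ (gφ x) x)
    (hφ_sc : ∀ x y, φ y ≥ φ x + ⟪gφ x, y - x⟫ + 1 / 2 * ‖y - x‖ ^ 2)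
    (x₀ : E) (hx₀ : x₀ ∈ X)
    -- Bregman diameter: D² = max_{x ∈ X} B_φ(x, x₀)
    (hDdiam : ∀ x ∈ X, φ x - φ x₀ - ⟪gφ x₀, x - x₀⟫ ≤ D ^ 2)
    (μ ν u gbar : ℕ → E)
    (hμ0 : μ 0 = x₀) (hν0 : ν 0 = x₀) (hg0 : gbar 0 = 0)
    (hu : ∀ t : ℕ, u (t + 1) =
      (1 - 2 / ((t + 1 : ℝ) + 1)) • μ t + (2 / ((t + 1 : ℝ) + 1)) • ν t)
    (hg : ∀ t : ℕ, gbar (t + 1) =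
      (1 - 2 / ((t + 1 : ℝ) + 1)) • gbar t + (2 / ((t + 1 : ℝ) + 1)) • gf (u (t + 1)))
    (hν : ∀ t : ℕ, ν (t + 1) ∈ X ∧
      IsMinOn (fun z => ⟪gbar (t + 1), z⟫
          + (4 * Lip / ((t + 1 : ℝ) * ((t + 1 : ℝ) + 1)))
            * (φ z - φ x₀ - ⟪gφ x₀, z - x₀⟫))
        X (ν (t + 1)))
    (hμ : ∀ t : ℕ, μ (t + 1) =
      (1 - 2 / ((t + 1 : ℝ) + 1)) • μ t + (2 / ((t + 1 : ℝ) + 1)) • ν (t + 1))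
    (xstar : E) (hxstar : xstar ∈ X) (hxstar_min : IsMinOn f X xstar) :
    ∀ t : ℕ, 1 ≤ t → f (μ t) - f xstar ≤ 4 * Lip * D ^ 2 / (t : ℝ) ^ 2 :=
  accelerated_dual_averaging_rate_general X hX f φ gf gφ Lip D hLip hf_conv hf_grad hf_lip hφ_sc x₀
    hx₀ hDdiam μ ν u gbar hμ0 hν0 hu hg hν hμ xstar hxstar
end
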